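/- arXiv:2602.21062 — 12 statements merged into one kernel-verified Lean document; each statement's English description precedes it below -/
import Mathlib

section
/- Under the stated data (thresholds and transfer property), the following are equivalent: (1) min(λMA, λMB) < min(λNA, λNB); (2) max(λMA, λMB) < min(λNA, λNB); (3) λMA = λMB and λMA < min(λNA, λNB). (Proposition 4.2, items (1)–(3).) -/
/-- `λ₀` is a threshold for the family of extinction probability vectors `q`:
below `λ₀` extinction is almost sure (the vector is constantly `1`),
above `λ₀` there is survival with positive probability from every site. -/
def IsThreshold {X : Type*} (q : ℝ → X → ℝ) (lam₀ : ℝ) : Prop :=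
  (∀ lam : ℝ, lam < lam₀ → q lam = fun _ => 1) ∧
  (∀ lam : ℝ, lam₀ < lam → ∀ x, q lam x < 1)

/-!
If `min λMA λMB < min λNA λNB` but, say, `λMA < λMB`, pick `λ` strictly between `λMA` and
`min λMB (min λNA λNB)`. There `qMA λ < 𝟙 = qMB λ`, whereas `qNA λ = 𝟙 = qNB λ`, contradicting
the transfer of `qMA λ < qMB λ` to `N`. Hence the two critical parameters of `M` coincide, and the
three conditions all say that this common value lies below both critical parameters of `N`.
-/

namespace IsThreshold

variable {X : Type*} {q : ℝ → X → ℝ} {lam₀ lam : ℝ}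

theorem eq_one (h : IsThreshold q lam₀) (hlam : lam < lam₀) : q lam = 1 :=
  h.1 lam hlam

theorem lt_one [Nonempty X] (h : IsThreshold q lam₀) (hlam : lam₀ < lam) : q lam < 1 :=
  Pi.lt_def.mpr ⟨fun x => (h.2 lam hlam x).le, Classical.arbitrary X, h.2 lam hlam _⟩

end IsThreshold

theorem le_of_isThreshold_of_lt_transfer {X : Type*} [Nonempty X]
    {q₁ q₂ p₁ p₂ : ℝ → X → ℝ} {l₁ l₂ r₁ r₂ : ℝ}
    (hq₁ : IsThreshold q₁ l₁) (hq₂ : IsThreshold q₂ l₂)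
    (hp₁ : IsThreshold p₁ r₁) (hp₂ : IsThreshold p₂ r₂)
    (hl₁ : 0 < l₁) (hr₁ : l₁ < r₁) (hr₂ : l₁ < r₂)
    (transfer : ∀ lam : ℝ, 0 < lam → q₁ lam < q₂ lam → p₁ lam < p₂ lam) :
    l₂ ≤ l₁ := by
  by_contra! hl₂
  obtain ⟨lam, hl₁lam, hlam⟩ := exists_between (lt_min hl₂ (lt_min hr₁ hr₂))
  rw [lt_min_iff, lt_min_iff] at hlam
  have hq : q₁ lam < q₂ lam := hq₂.eq_one hlam.1 ▸ hq₁.lt_one hl₁lam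
  have hp := transfer lam (hl₁.trans hl₁lam) hq
  rw [hp₁.eq_one hlam.2.1, hp₂.eq_one hlam.2.2] at hp
  exact lt_irrefl _ hp

theorem prop42_items1to3_general
    {X : Type*} [Nonempty X]
    (qMA qMB qNA qNB : ℝ → X → ℝ)
    (lMA lMB lNA lNB : ℝ)
    (hMA : 0 < lMA) (hMB : 0 < lMB)
    (htMA : IsThreshold qMA lMA) (htMB : IsThreshold qMB lMB)
    (htNA : IsThreshold qNA lNA) (htNB : IsThreshold qNB lNB)
    (transfer : ∀ lam : ℝ, 0 < lam →
      (qMA lam = qMB lam ↔ qNA lam = qNB lam) ∧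
      (qMA lam < qMB lam ↔ qNA lam < qNB lam) ∧
      (qMB lam < qMA lam ↔ qNB lam < qNA lam)) :
    ((min lMA lMB < min lNA lNB ↔ max lMA lMB < min lNA lNB) ∧
     (min lMA lMB < min lNA lNB ↔ (lMA = lMB ∧ lMA < min lNA lNB))) := by
  have key : min lMA lMB < min lNA lNB → lMA = lMB := by
    intro h
    rcases le_total lMA lMB with hle | hle
    · rw [min_eq_left hle, lt_min_iff] at h
      exact le_antisymm hle <| le_of_isThreshold_of_lt_transfer htMA htMB htNA htNB hMA h.1 h.2
        fun lam hlam => (transfer lam hlam).2.1.mp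
    · rw [min_eq_right hle, lt_min_iff] at h
      exact le_antisymm (le_of_isThreshold_of_lt_transfer htMB htMA htNB htNA hMB h.2 h.1
        fun lam hlam => (transfer lam hlam).2.2.mp) hle
  exact ⟨⟨fun h => by simpa [key h] using h, min_le_max.trans_lt⟩,
    ⟨fun h => ⟨key h, by simpa [key h] using h⟩, fun ⟨he, h⟩ => by simpa [he] using h⟩⟩

theorem prop42_items1to3
    {X : Type*} [Nonempty X]
    (qMA qMB qNA qNB : ℝ → X → ℝ)
    (lMA lMB lNA lNB : ℝ)
    (hMA : 0 < lMA) (hMB : 0 < lMB) (hNA : 0 < lNA) (hNB : 0 < lNB)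
    (htMA : IsThreshold qMA lMA) (htMB : IsThreshold qMB lMB)
    (htNA : IsThreshold qNA lNA) (htNB : IsThreshold qNB lNB)
    (transfer : ∀ lam : ℝ, 0 < lam →
      (qMA lam = qMB lam ↔ qNA lam = qNB lam) ∧
      (qMA lam < qMB lam ↔ qNA lam < qNB lam) ∧
      (qMB lam < qMA lam ↔ qNB lam < qNA lam)) :
    ((min lMA lMB < min lNA lNB ↔ max lMA lMB < min lNA lNB) ∧
     (min lMA lMB < min lNA lNB ↔ (lMA = lMB ∧ lMA < min lNA lNB))) :=
  prop42_items1to3_general qMA qMB qNA qNB lMA lMB lNA lNB hMA hMB htMA htMB htNA htNB transfer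
end

section
/- Under the stated data (thresholds and transfer property), if λMA ≠ λMB, then min(λNA, λNB) ≤ min(λMA, λMB). (Proposition 4.2, item (4).) -/
/-! Suppose `min λNA λNB > min λMA λMB` and, say, `λMA < λMB`. For `λ` slightly above `λMA`
the process `M` survives in `A` but not in `B`, so `qMA λ < qMB λ = 𝟙`, while `N` survives in
neither set, so `qNA λ = qNB λ = 𝟙`. This contradicts the transfer of strict comparisons. -/

namespace IsThreshold

variable {X : Type*} {q : ℝ → X → ℝ} {lam₀ lam : ℝ}

theorem eq_one_of_lt (hq : IsThreshold q lam₀) (h : lam < lam₀) : q lam = 1 :=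
  hq.1 lam h

theorem lt_one_of_gt [Nonempty X] (hq : IsThreshold q lam₀) (h : lam₀ < lam) : q lam < 1 :=
  Pi.lt_def.2 ⟨fun x => (hq.2 lam h x).le, Classical.arbitrary X, hq.2 lam h _⟩

theorem lt_of_gt_of_lt [Nonempty X] {q' : ℝ → X → ℝ} {lam₁ : ℝ} (hq : IsThreshold q lam₀)
    (hq' : IsThreshold q' lam₁) (h₀ : lam₀ < lam) (h₁ : lam < lam₁) : q lam < q' lam :=
  (hq'.eq_one_of_lt h₁).symm ▸ hq.lt_one_of_gt h₀

end IsThreshold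

theorem min_threshold_le_of_lt {X : Type*} [Nonempty X] {qA qB qA' qB' : ℝ → X → ℝ}
    {lA lB lA' lB' : ℝ} (hA : IsThreshold qA lA) (hB : IsThreshold qB lB)
    (hA' : IsThreshold qA' lA') (hB' : IsThreshold qB' lB') (hpos : 0 < lA)
    (transfer : ∀ lam : ℝ, 0 < lam → qA lam < qB lam → qA' lam < qB' lam) (hlt : lA < lB) :
    min lA' lB' ≤ lA := by
  by_contra! h
  obtain ⟨lam, hlA, hlam⟩ := exists_between (lt_min hlt h)
  have hlB : lam < lB := hlam.trans_le (min_le_left _ _)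
  have hlA' : lam < lA' := hlam.trans_le ((min_le_right _ _).trans (min_le_left _ _))
  have hlB' : lam < lB' := hlam.trans_le ((min_le_right _ _).trans (min_le_right _ _))
  have hN : qA' lam < qB' lam :=
    transfer lam (hpos.trans hlA) (hA.lt_of_gt_of_lt hB hlA hlB)
  rw [hA'.eq_one_of_lt hlA', hB'.eq_one_of_lt hlB'] at hN
  exact lt_irrefl _ hN

theorem prop42_item4_general
    {X : Type*} [Nonempty X]
    (qMA qMB qNA qNB : ℝ → X → ℝ)
    (lMA lMB lNA lNB : ℝ)
    (hMA : 0 < lMA) (hMB : 0 < lMB)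
    (htMA : IsThreshold qMA lMA) (htMB : IsThreshold qMB lMB)
    (htNA : IsThreshold qNA lNA) (htNB : IsThreshold qNB lNB)
    (transfer : ∀ lam : ℝ, 0 < lam →
      (qMA lam = qMB lam ↔ qNA lam = qNB lam) ∧
      (qMA lam < qMB lam ↔ qNA lam < qNB lam) ∧
      (qMB lam < qMA lam ↔ qNB lam < qNA lam)) :
    (lMA ≠ lMB → min lNA lNB ≤ min lMA lMB) := by
  intro hne
  rcases hne.lt_or_gt with hlt | hlt
  · rw [min_eq_left hlt.le]
    exact min_threshold_le_of_lt htMA htMB htNA htNB hMA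
      (fun lam hlam => (transfer lam hlam).2.1.1) hlt
  · rw [min_eq_right hlt.le, min_comm]
    exact min_threshold_le_of_lt htMB htMA htNB htNA hMB
      (fun lam hlam => (transfer lam hlam).2.2.1) hlt

theorem prop42_item4
    {X : Type*} [Nonempty X]
    (qMA qMB qNA qNB : ℝ → X → ℝ)
    (lMA lMB lNA lNB : ℝ)
    (hMA : 0 < lMA) (hMB : 0 < lMB) (hNA : 0 < lNA) (hNB : 0 < lNB)
    (htMA : IsThreshold qMA lMA) (htMB : IsThreshold qMB lMB)
    (htNA : IsThreshold qNA lNA) (htNB : IsThreshold qNB lNB)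
    (transfer : ∀ lam : ℝ, 0 < lam →
      (qMA lam = qMB lam ↔ qNA lam = qNB lam) ∧
      (qMA lam < qMB lam ↔ qNA lam < qNB lam) ∧
      (qMB lam < qMA lam ↔ qNB lam < qNA lam)) :
    (lMA ≠ lMB → min lNA lNB ≤ min lMA lMB) :=
  prop42_item4_general qMA qMB qNA qNB lMA lMB lNA lNB hMA hMB htMA htMB htNA htNB transfer
end

section
/- Under the stated data (thresholds and transfer property), if λMA ≠ λMB and λNA ≠ λNB, then min(λNA, λNB) = min(λMA, λMB); moreover, λMA = min(λMA, λMB) ↔ λNA = min(λNA, λNB), and λMB = min(λMA, λMB) ↔ λNB = min(λNA, λNB). (Proposition 4.2, item (5).) -/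
/-!
Below both thresholds the two vectors coincide (both are `𝟙`), and strictly between the thresholds
the vector with the smaller threshold lies strictly below `𝟙`, the other one. Hence `min λ(A) λ(B)`
is where `q_A` and `q_B` stop agreeing, and which of the two is the minimum is read off from the
strict order of `q_A λ` and `q_B λ` just above it. Both features are preserved by the transfer
property, so both pass from `M` to `N` and back.
-/

namespace IsThreshold

variable {X : Type*} {qA qB qA' qB' : ℝ → X → ℝ} {lA lB lA' lB' lam : ℝ}

theorem apply_lt_apply [Nonempty X] (tA : IsThreshold qA lA) (tB : IsThreshold qB lB)
    (hA : lA < lam) (hB : lam < lB) : qA lam < qB lam := by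
  rw [tB.1 lam hB]
  exact Pi.lt_def.2 ⟨fun x => (tA.2 lam hA x).le, Classical.arbitrary X, tA.2 lam hA _⟩

theorem apply_ne_apply [Nonempty X] (tA : IsThreshold qA lA) (tB : IsThreshold qB lB)
    (hmin : min lA lB < lam) (hmax : lam < max lA lB) : qA lam ≠ qB lam := by
  rcases le_total lA lB with h | h
  · rw [min_eq_left h] at hmin
    rw [max_eq_right h] at hmax
    exact (tA.apply_lt_apply tB hmin hmax).ne
  · rw [min_eq_right h] at hmin
    rw [max_eq_left h] at hmax
    exact (tB.apply_lt_apply tA hmin hmax).ne'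

theorem apply_eq_apply (tA : IsThreshold qA lA) (tB : IsThreshold qB lB)
    (hA : lam < lA) (hB : lam < lB) : qA lam = qB lam := by
  rw [tA.1 lam hA, tB.1 lam hB]

variable [Nonempty X] (tA : IsThreshold qA lA) (tB : IsThreshold qB lB)
  (tA' : IsThreshold qA' lA') (tB' : IsThreshold qB' lB')
include tA tB tA' tB'

theorem min_le_min_of_eq_imp_eq (hne : lA ≠ lB) (hpos : 0 < min lA lB)
    (transfer : ∀ lam, 0 < lam → qA' lam = qB' lam → qA lam = qB lam) :
    min lA' lB' ≤ min lA lB := by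
  by_contra! hlt
  obtain ⟨lam, hmin, hlam⟩ := exists_between (lt_min (min_lt_max.2 hne) hlt)
  obtain ⟨hmax, hmin'⟩ := lt_min_iff.1 hlam
  obtain ⟨hA', hB'⟩ := lt_min_iff.1 hmin'
  exact tA.apply_ne_apply tB hmin hmax
    (transfer lam (hpos.trans hmin) (tA'.apply_eq_apply tB' hA' hB'))

theorem lt_of_lt_imp_lt (hA : 0 < lA) (hAB : lA < lB) (hne' : lA' ≠ lB')
    (hmin : min lA' lB' = min lA lB)
    (transfer : ∀ lam, 0 < lam → qA lam < qB lam → qA' lam < qB' lam) : lA' < lB' := by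
  refine lt_of_le_of_ne (not_lt.1 fun hBA' => ?_) hne'
  rw [min_eq_right hBA'.le, min_eq_left hAB.le] at hmin
  obtain ⟨lam, hlam, hlam'⟩ := exists_between (lt_min hAB (hmin ▸ hBA'))
  obtain ⟨hB, hA'⟩ := lt_min_iff.1 hlam'
  exact lt_asymm (transfer lam (hA.trans hlam) (tA.apply_lt_apply tB hlam hB))
    (tB'.apply_lt_apply tA' (hmin ▸ hlam) hA')

end IsThreshold

theorem prop42_item5
    {X : Type*} [Nonempty X]
    (qMA qMB qNA qNB : ℝ → X → ℝ)
    (lMA lMB lNA lNB : ℝ)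
    (hMA : 0 < lMA) (hMB : 0 < lMB) (hNA : 0 < lNA) (hNB : 0 < lNB)
    (htMA : IsThreshold qMA lMA) (htMB : IsThreshold qMB lMB)
    (htNA : IsThreshold qNA lNA) (htNB : IsThreshold qNB lNB)
    (transfer : ∀ lam : ℝ, 0 < lam →
      (qMA lam = qMB lam ↔ qNA lam = qNB lam) ∧
      (qMA lam < qMB lam ↔ qNA lam < qNB lam) ∧
      (qMB lam < qMA lam ↔ qNB lam < qNA lam)) :
    (lMA ≠ lMB → lNA ≠ lNB →
      min lNA lNB = min lMA lMB ∧
      (lMA = min lMA lMB ↔ lNA = min lNA lNB) ∧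
      (lMB = min lMA lMB ↔ lNB = min lNA lNB)) := by
  intro hM hN
  have hmin : min lNA lNB = min lMA lMB :=
    le_antisymm
      (htMA.min_le_min_of_eq_imp_eq htMB htNA htNB hM (lt_min hMA hMB)
        fun lam hlam => (transfer lam hlam).1.2)
      (htNA.min_le_min_of_eq_imp_eq htNB htMA htMB hN (lt_min hNA hNB)
        fun lam hlam => (transfer lam hlam).1.1)
  have hmin' : min lNB lNA = min lMB lMA := by rw [min_comm, hmin, min_comm]
  have hAB : lMA < lMB ↔ lNA < lNB :=
    ⟨fun h => htMA.lt_of_lt_imp_lt htMB htNA htNB hMA h hN hmin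
        fun lam hlam => (transfer lam hlam).2.1.1,
      fun h => htNA.lt_of_lt_imp_lt htNB htMA htMB hNA h hM hmin.symm
        fun lam hlam => (transfer lam hlam).2.1.2⟩
  have hBA : lMB < lMA ↔ lNB < lNA :=
    ⟨fun h => htMB.lt_of_lt_imp_lt htMA htNB htNA hMB h hN.symm hmin'
        fun lam hlam => (transfer lam hlam).2.2.1,
      fun h => htNB.lt_of_lt_imp_lt htNA htMB htMA hNB h hM.symm hmin'.symm
        fun lam hlam => (transfer lam hlam).2.2.2⟩
  refine ⟨hmin, ?_, ?_⟩
  · rw [eq_comm, min_eq_left_iff, hM.le_iff_lt, eq_comm, min_eq_left_iff, hN.le_iff_lt]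
    exact hAB
  · rw [eq_comm, min_eq_right_iff, hM.symm.le_iff_lt, eq_comm, min_eq_right_iff,
      hN.symm.le_iff_lt]
    exact hBA
end

section
/- Under the stated data (thresholds and transfer property), if λMA ≠ λMB, then either (λNA = λNB and λNA ≤ min(λMA, λMB)) or (min(λNA, λNB) = min(λMA, λMB) and min(λMA, λMB) < max(λNA, λNB)). (Proposition 4.2, item (6).) -/
/-!
Two vectors with thresholds `a` and `b` coincide (both are `𝟙`) below `min a b` and differ
strictly between `min a b` and `max a b`. So if the thresholds of one process differ, the
transferred equality pattern forces the vectors of the other process to differ just above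
the first process's smaller threshold; hence the other process's smaller threshold is no larger.
When both pairs of thresholds are distinct this applies in both directions and the minima agree.
-/

namespace IsThreshold

variable {X : Type*} {qA qB : ℝ → X → ℝ} {lA lB lam : ℝ}

theorem eq_of_lt_min (hA : IsThreshold qA lA) (hB : IsThreshold qB lB)
    (h : lam < min lA lB) : qA lam = qB lam :=
  (hA.1 lam (h.trans_le (min_le_left _ _))).trans
    (hB.1 lam (h.trans_le (min_le_right _ _))).symm

theorem lt_of_lt_of_lt [Nonempty X] (hA : IsThreshold qA lA) (hB : IsThreshold qB lB)
    (hAlam : lA < lam) (hlamB : lam < lB) : qA lam < qB lam := by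
  rw [hB.1 lam hlamB, Pi.lt_def]
  obtain ⟨x⟩ := ‹Nonempty X›
  exact ⟨fun y => (hA.2 lam hAlam y).le, x, hA.2 lam hAlam x⟩

theorem ne_of_min_lt_of_lt_max [Nonempty X] (hA : IsThreshold qA lA) (hB : IsThreshold qB lB)
    (hlo : min lA lB < lam) (hhi : lam < max lA lB) : qA lam ≠ qB lam := by
  rcases le_total lA lB with hle | hle
  · rw [min_eq_left hle] at hlo
    rw [max_eq_right hle] at hhi
    exact (hA.lt_of_lt_of_lt hB hlo hhi).ne
  · rw [min_eq_right hle] at hlo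
    rw [max_eq_left hle] at hhi
    exact (hB.lt_of_lt_of_lt hA hlo hhi).ne'

theorem min_le_min_of_eq_iff_eq [Nonempty X] {pA pB : ℝ → X → ℝ} {mA mB : ℝ}
    (hA : IsThreshold qA lA) (hB : IsThreshold qB lB)
    (hpA : IsThreshold pA mA) (hpB : IsThreshold pB mB)
    (hlA : 0 < lA) (hlB : 0 < lB) (hne : lA ≠ lB)
    (hiff : ∀ lam, 0 < lam → (qA lam = qB lam ↔ pA lam = pB lam)) :
    min mA mB ≤ min lA lB := by
  by_contra! hlt
  obtain ⟨lam, hlo, hhi⟩ := exists_between (lt_min hlt (min_lt_max.2 hne))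
  have hpos : 0 < lam := (lt_min hlA hlB).trans hlo
  have hp : pA lam = pB lam := hpA.eq_of_lt_min hpB (hhi.trans_le (min_le_left _ _))
  exact hA.ne_of_min_lt_of_lt_max hB hlo (hhi.trans_le (min_le_right _ _))
    ((hiff lam hpos).2 hp)

end IsThreshold

theorem prop42_item6
    {X : Type*} [Nonempty X]
    (qMA qMB qNA qNB : ℝ → X → ℝ)
    (lMA lMB lNA lNB : ℝ)
    (hMA : 0 < lMA) (hMB : 0 < lMB) (hNA : 0 < lNA) (hNB : 0 < lNB)
    (htMA : IsThreshold qMA lMA) (htMB : IsThreshold qMB lMB)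
    (htNA : IsThreshold qNA lNA) (htNB : IsThreshold qNB lNB)
    (transfer : ∀ lam : ℝ, 0 < lam →
      (qMA lam = qMB lam ↔ qNA lam = qNB lam) ∧
      (qMA lam < qMB lam ↔ qNA lam < qNB lam) ∧
      (qMB lam < qMA lam ↔ qNB lam < qNA lam)) :
    (lMA ≠ lMB →
      (lNA = lNB ∧ lNA ≤ min lMA lMB) ∨
      (min lNA lNB = min lMA lMB ∧ min lMA lMB < max lNA lNB)) := by
  intro hMne
  have hiff : ∀ lam, 0 < lam → (qMA lam = qMB lam ↔ qNA lam = qNB lam) :=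
    fun lam hlam => (transfer lam hlam).1
  have hNM : min lNA lNB ≤ min lMA lMB :=
    htMA.min_le_min_of_eq_iff_eq htMB htNA htNB hMA hMB hMne hiff
  rcases eq_or_ne lNA lNB with hNeq | hNne
  · left
    exact ⟨hNeq, by rwa [← hNeq, min_self] at hNM⟩
  · have hMN : min lMA lMB ≤ min lNA lNB :=
      htNA.min_le_min_of_eq_iff_eq htNB htMA htMB hNA hNB hNne fun lam hlam => (hiff lam hlam).symm
    have hmin : min lNA lNB = min lMA lMB := le_antisymm hNM hMN
    right
    exact ⟨hmin, hmin ▸ min_lt_max.2 hNne⟩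
end

section
/- Under the stated data (thresholds and transfer property), if λNA ≠ λNB and max(λMA, λMB) > min(λNA, λNB), then λMA ≠ λMB and max(λMA, λMB) > min(λMA, λMB) = min(λNA, λNB). (Corollary 4.3, item (2).) -/
open Set

lemma IsThreshold.apply_ne_one {X : Type*} [Nonempty X] {q : ℝ → X → ℝ} {l lam : ℝ}
    (hq : IsThreshold q l) (hlam : l < lam) : q lam ≠ fun _ => 1 := by
  obtain ⟨x⟩ := ‹Nonempty X›
  exact fun h => (hq.2 lam hlam x).ne (congrFun h x)

lemma IsThreshold.apply_eq_of_lt_min {X : Type*} {q₁ q₂ : ℝ → X → ℝ} {l₁ l₂ lam : ℝ}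
    (hq₁ : IsThreshold q₁ l₁) (hq₂ : IsThreshold q₂ l₂) (hlam : lam < min l₁ l₂) :
    q₁ lam = q₂ lam :=
  (hq₁.1 lam (hlam.trans_le (min_le_left _ _))).trans
    (hq₂.1 lam (hlam.trans_le (min_le_right _ _))).symm

lemma IsThreshold.apply_ne_of_mem_uIoo {X : Type*} [Nonempty X] {q₁ q₂ : ℝ → X → ℝ}
    {l₁ l₂ lam : ℝ} (hq₁ : IsThreshold q₁ l₁) (hq₂ : IsThreshold q₂ l₂) (hlam : lam ∈ uIoo l₁ l₂) :
    q₁ lam ≠ q₂ lam := by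
  rw [uIoo_eq_union] at hlam
  rcases hlam with ⟨h₁, h₂⟩ | ⟨h₂, h₁⟩
  · rw [hq₂.1 lam h₂]
    exact hq₁.apply_ne_one h₁
  · rw [hq₁.1 lam h₁]
    exact (hq₂.apply_ne_one h₂).symm

lemma IsThreshold.min_le_min_of_eq_imp_eq_s7 {X : Type*} [Nonempty X] {q₁ q₂ r₁ r₂ : ℝ → X → ℝ}
    {l₁ l₂ m₁ m₂ : ℝ} (hq₁ : IsThreshold q₁ l₁) (hq₂ : IsThreshold q₂ l₂)
    (hr₁ : IsThreshold r₁ m₁) (hr₂ : IsThreshold r₂ m₂)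
    (hm_nonneg : 0 ≤ min m₁ m₂) (hm : min m₁ m₂ < max m₁ m₂)
    (h : ∀ lam, 0 < lam → q₁ lam = q₂ lam → r₁ lam = r₂ lam) :
    min l₁ l₂ ≤ min m₁ m₂ := by
  by_contra! hlt
  obtain ⟨lam, hlo, hhi⟩ := exists_between (lt_min hm hlt)
  have hq : q₁ lam = q₂ lam := hq₁.apply_eq_of_lt_min hq₂ (hhi.trans_le (min_le_right _ _))
  exact hr₁.apply_ne_of_mem_uIoo hr₂ ⟨hlo, hhi.trans_le (min_le_left _ _)⟩
    (h lam (hm_nonneg.trans_lt hlo) hq)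

theorem cor43_item2
    {X : Type*} [Nonempty X]
    (qMA qMB qNA qNB : ℝ → X → ℝ)
    (lMA lMB lNA lNB : ℝ)
    (hMA : 0 < lMA) (hMB : 0 < lMB) (hNA : 0 < lNA) (hNB : 0 < lNB)
    (htMA : IsThreshold qMA lMA) (htMB : IsThreshold qMB lMB)
    (htNA : IsThreshold qNA lNA) (htNB : IsThreshold qNB lNB)
    (transfer : ∀ lam : ℝ, 0 < lam →
      (qMA lam = qMB lam ↔ qNA lam = qNB lam) ∧
      (qMA lam < qMB lam ↔ qNA lam < qNB lam) ∧
      (qMB lam < qMA lam ↔ qNB lam < qNA lam)) :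
    (lNA ≠ lNB → min lNA lNB < max lMA lMB →
      lMA ≠ lMB ∧ min lMA lMB = min lNA lNB ∧ min lMA lMB < max lMA lMB) := by
  intro hN hNM
  have hMN : min lMA lMB ≤ min lNA lNB :=
    htMA.min_le_min_of_eq_imp_eq_s7 htMB htNA htNB (lt_min hNA hNB).le (min_lt_max.mpr hN)
      fun lam hlam => (transfer lam hlam).1.mp
  have hM : min lMA lMB < max lMA lMB := hMN.trans_lt hNM
  have hNM' : min lNA lNB ≤ min lMA lMB :=
    htNA.min_le_min_of_eq_imp_eq_s7 htNB htMA htMB (lt_min hMA hMB).le hM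
      fun lam hlam => (transfer lam hlam).1.mpr
  exact ⟨min_lt_max.mp hM, hMN.antisymm hNM', hM⟩
end

section
/- Under the stated data (thresholds and transfer property), if λMB > λMA, then λMA ≥ λNA. (Corollary 4.4, item (2): either the critical parameter of A for the original process dominates that of the modified process, or the two critical parameters of the original process coincide.) -/
namespace IsThreshold

variable {X : Type*} [Nonempty X] {q p : ℝ → X → ℝ} {a b lam : ℝ}

theorem lt_of_mem_Ioo (hq : IsThreshold q a) (hp : IsThreshold p b) (hlam : lam ∈ Set.Ioo a b) :
    q lam < p lam := by
  obtain ⟨x₀⟩ := ‹Nonempty X›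
  rw [hp.1 lam hlam.2]
  exact Pi.lt_def.2 ⟨fun x => (hq.2 lam hlam.1 x).le, x₀, hq.2 lam hlam.1 x₀⟩

theorem not_one_lt (hq : IsThreshold q a) (hlam : lam ≠ a) : ¬ (fun _ => 1) < q lam := by
  intro hlt
  rcases hlam.lt_or_gt with hbelow | habove
  · exact hlt.ne (hq.1 lam hbelow).symm
  · obtain ⟨x₀⟩ := ‹Nonempty X›
    exact (hlt.le x₀).not_gt (hq.2 lam habove x₀)

end IsThreshold

theorem cor44_item2_general
    {X : Type*} [Nonempty X]
    (qMA qMB qNA qNB : ℝ → X → ℝ)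
    (lMA lMB lNA lNB : ℝ)
    (hMA : 0 < lMA)
    (htMA : IsThreshold qMA lMA) (htMB : IsThreshold qMB lMB)
    (htNA : IsThreshold qNA lNA) (htNB : IsThreshold qNB lNB)
    (transfer : ∀ lam : ℝ, 0 < lam →
      (qMA lam = qMB lam ↔ qNA lam = qNB lam) ∧
      (qMA lam < qMB lam ↔ qNA lam < qNB lam) ∧
      (qMB lam < qMA lam ↔ qNB lam < qNA lam)) :
    (lMA < lMB → lNA ≤ lMA) := by
  intro hAB
  by_contra! hNA
  obtain ⟨lam, ⟨hlam_gt, hlam_lt⟩, hlam_ne⟩ :=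
    (Set.Ioo_infinite (lt_min hAB hNA)).exists_notMem_finite (Set.finite_singleton lNB)
  have hM : qMA lam < qMB lam :=
    htMA.lt_of_mem_Ioo htMB ⟨hlam_gt, hlam_lt.trans_le (min_le_left _ _)⟩
  have hN : qNA lam < qNB lam := ((transfer lam (hMA.trans hlam_gt)).2.1).1 hM
  rw [htNA.1 lam (hlam_lt.trans_le (min_le_right _ _))] at hN
  exact htNB.not_one_lt hlam_ne hN

theorem cor44_item2
    {X : Type*} [Nonempty X]
    (qMA qMB qNA qNB : ℝ → X → ℝ)
    (lMA lMB lNA lNB : ℝ)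
    (hMA : 0 < lMA) (hMB : 0 < lMB) (hNA : 0 < lNA) (hNB : 0 < lNB)
    (htMA : IsThreshold qMA lMA) (htMB : IsThreshold qMB lMB)
    (htNA : IsThreshold qNA lNA) (htNB : IsThreshold qNB lNB)
    (transfer : ∀ lam : ℝ, 0 < lam →
      (qMA lam = qMB lam ↔ qNA lam = qNB lam) ∧
      (qMA lam < qMB lam ↔ qNA lam < qNB lam) ∧
      (qMB lam < qMA lam ↔ qNB lam < qNA lam)) :
    (lMA < lMB → lNA ≤ lMA) :=
  cor44_item2_general qMA qMB qNA qNB lMA lMB lNA lNB hMA htMA htMB htNA htNB transfer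
end

section
/- Under the stated data (thresholds and transfer property), if max(λMA, λNB) < λMB, then for every λ with max(λMA, λNB) < λ < λMB one has: qNB λ x < 1 for every x ∈ X, and qNA λ < qNB λ in the pointwise order on X → ℝ. (By the paper's Theorem 2.3, these inequalities mean that the modified process at parameter λ survives in B with positive probability and, with positive probability, survives in A while becoming extinct in B; this is the abstract content of Proposition 4.6.) -/
theorem IsThreshold.lt_of_lt_of_lt_s10 {X : Type*} [Nonempty X] {q₁ q₂ : ℝ → X → ℝ}
    {l₁ l₂ lam : ℝ} (h₁ : IsThreshold q₁ l₁) (h₂ : IsThreshold q₂ l₂)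
    (hl₁ : l₁ < lam) (hl₂ : lam < l₂) : q₁ lam < q₂ lam := by
  rw [h₂.1 lam hl₂]
  exact lt_of_strongLT (h₁.2 lam hl₁)

theorem prop46_general
    {X : Type*} [Nonempty X]
    (qMA qMB qNA qNB : ℝ → X → ℝ)
    (lMA lMB lNB : ℝ)
    (hMA : 0 < lMA)
    (htMA : IsThreshold qMA lMA) (htMB : IsThreshold qMB lMB)
    (htNB : IsThreshold qNB lNB)
    (transfer : ∀ lam : ℝ, 0 < lam →
      (qMA lam = qMB lam ↔ qNA lam = qNB lam) ∧
      (qMA lam < qMB lam ↔ qNA lam < qNB lam) ∧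
      (qMB lam < qMA lam ↔ qNB lam < qNA lam)) :
    (max lMA lNB < lMB →
      ∀ lam : ℝ, max lMA lNB < lam → lam < lMB →
        (∀ x, qNB lam x < 1) ∧ qNA lam < qNB lam) := by
  intro _ lam hlo hhi
  obtain ⟨hMA_lt, hNB_lt⟩ := max_lt_iff.mp hlo
  refine ⟨htNB.2 lam hNB_lt, ?_⟩
  exact ((transfer lam (hMA.trans hMA_lt)).2.1).mp (htMA.lt_of_lt_of_lt_s10 htMB hMA_lt hhi)

theorem prop46
    {X : Type*} [Nonempty X]
    (qMA qMB qNA qNB : ℝ → X → ℝ)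
    (lMA lMB lNA lNB : ℝ)
    (hMA : 0 < lMA) (hMB : 0 < lMB) (hNA : 0 < lNA) (hNB : 0 < lNB)
    (htMA : IsThreshold qMA lMA) (htMB : IsThreshold qMB lMB)
    (htNA : IsThreshold qNA lNA) (htNB : IsThreshold qNB lNB)
    (transfer : ∀ lam : ℝ, 0 < lam →
      (qMA lam = qMB lam ↔ qNA lam = qNB lam) ∧
      (qMA lam < qMB lam ↔ qNA lam < qNB lam) ∧
      (qMB lam < qMA lam ↔ qNB lam < qNA lam)) :
    (max lMA lNB < lMB →
      ∀ lam : ℝ, max lMA lNB < lam → lam < lMB →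
        (∀ x, qNB lam x < 1) ∧ qNA lam < qNB lam) :=
  prop46_general qMA qMB qNA qNB lMA lMB lNB hMA htMA htMB htNB transfer
end

section
/- Under the stated data, if λMA < λMs, then either (λNs = λNA and λNA ≤ λMA) or (λNA = λMA and λMA < λNs). (Corollary 5.5: trichotomy for the critical parameter of a set A versus the local critical parameter under finite modifications.) -/
namespace IsThreshold

variable {X : Type*} {q₁ q₂ r₁ r₂ : ℝ → X → ℝ} {l₁ l₂ m₁ m₂ lam : ℝ}

theorem apply_eq_of_lt_of_lt (h₁ : IsThreshold q₁ l₁) (h₂ : IsThreshold q₂ l₂)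
    (hl₁ : lam < l₁) (hl₂ : lam < l₂) : q₁ lam = q₂ lam :=
  (h₁.1 lam hl₁).trans (h₂.1 lam hl₂).symm

theorem apply_lt_of_lt_of_lt [Nonempty X] (h₁ : IsThreshold q₁ l₁) (h₂ : IsThreshold q₂ l₂)
    (hl₁ : l₁ < lam) (hl₂ : lam < l₂) : q₁ lam < q₂ lam := by
  have hle : q₁ lam ≤ q₂ lam := fun x => by
    rw [h₂.1 lam hl₂]
    exact (h₁.2 lam hl₁ x).le
  obtain ⟨x⟩ := ‹Nonempty X›
  refine lt_of_le_of_ne hle fun heq => ?_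
  have hx := h₁.2 lam hl₁ x
  rw [heq, h₂.1 lam hl₂] at hx
  exact hx.false

theorem le_of_transfer_lt [Nonempty X] (h₁ : IsThreshold q₁ l₁) (h₂ : IsThreshold q₂ l₂)
    (h₁' : IsThreshold r₁ m₁) (h₂' : IsThreshold r₂ m₂)
    (hl₁ : 0 < l₁) (hl : l₁ < l₂) (hm : m₁ ≤ m₂)
    (transfer : ∀ lam, 0 < lam → q₁ lam < q₂ lam → r₁ lam < r₂ lam) : m₁ ≤ l₁ := by
  by_contra! hlm
  obtain ⟨lam, hl₁lam, hlam⟩ := exists_between (lt_min hl hlm)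
  have hlam₂ : lam < l₂ := hlam.trans_le (min_le_left _ _)
  have hlam₁' : lam < m₁ := hlam.trans_le (min_le_right _ _)
  have hr : r₁ lam < r₂ lam :=
    transfer lam (hl₁.trans hl₁lam) (h₁.apply_lt_of_lt_of_lt h₂ hl₁lam hlam₂)
  exact hr.ne (h₁'.apply_eq_of_lt_of_lt h₂' hlam₁' (hlam₁'.trans_le hm))

end IsThreshold

theorem cor55_general
    {X : Type*} [Nonempty X]
    (qMA qMC qNA qNC : ℝ → X → ℝ)
    (lMA lMs lNA lNs : ℝ)
    (hMA : 0 < lMA) (hNA : 0 < lNA)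
    (htMA : IsThreshold qMA lMA) (htMs : IsThreshold qMC lMs)
    (htNA : IsThreshold qNA lNA) (htNs : IsThreshold qNC lNs)
    (hlesN : lNA ≤ lNs)
    (transfer : ∀ lam : ℝ, 0 < lam →
      (qMA lam = qMC lam ↔ qNA lam = qNC lam) ∧
      (qMA lam < qMC lam ↔ qNA lam < qNC lam) ∧
      (qMC lam < qMA lam ↔ qNC lam < qNA lam)) :
    lMA < lMs →
      (lNs = lNA ∧ lNA ≤ lMA) ∨ (lNA = lMA ∧ lMA < lNs) := by
  intro hMAs
  have hNM : lNA ≤ lMA := htMA.le_of_transfer_lt htMs htNA htNs hMA hMAs hlesN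
    fun lam hlam => (transfer lam hlam).2.1.mp
  rcases hlesN.lt_or_eq with hNlt | hNeq
  · have hMN : lMA ≤ lNA := htNA.le_of_transfer_lt htNs htMA htMs hNA hNlt hMAs.le
      fun lam hlam => (transfer lam hlam).2.1.mpr
    obtain rfl := le_antisymm hNM hMN
    exact Or.inr ⟨rfl, hNlt⟩
  · exact Or.inl ⟨hNeq.symm, hNM⟩

theorem cor55
    {X : Type*} [Nonempty X]
    (qMA qMC qNA qNC : ℝ → X → ℝ)
    (lMA lMs lNA lNs : ℝ)
    (hMA : 0 < lMA) (hMs : 0 < lMs) (hNA : 0 < lNA) (hNs : 0 < lNs)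
    (htMA : IsThreshold qMA lMA) (htMs : IsThreshold qMC lMs)
    (htNA : IsThreshold qNA lNA) (htNs : IsThreshold qNC lNs)
    (hles : lMA ≤ lMs) (hlesN : lNA ≤ lNs)
    (transfer : ∀ lam : ℝ, 0 < lam →
      (qMA lam = qMC lam ↔ qNA lam = qNC lam) ∧
      (qMA lam < qMC lam ↔ qNA lam < qNC lam) ∧
      (qMC lam < qMA lam ↔ qNC lam < qNA lam)) :
    lMA < lMs →
      (lNs = lNA ∧ lNA ≤ lMA) ∨ (lNA = lMA ∧ lMA < lNs) :=
  cor55_general qMA qMC qNA qNC lMA lMs lNA lNs hMA hNA htMA htMs htNA htNs hlesN transfer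
end

section
/- Under the stated data, if λMw < λMs, then λNw ≤ λMw; if moreover λNw < λNs, then λNw = λMw. (Corollary 5.8: maximality of the global critical parameter within a finite-modification equivalence class — if one process has a pure global survival phase, no process in its class has a strictly larger global critical parameter, and any other process in the class with a pure global survival phase has the same global critical parameter.) -/
/-- Sharp threshold: extinction is almost sure also at `λ₀` itself. -/
def IsSharpThreshold {X : Type*} (q : ℝ → X → ℝ) (lam₀ : ℝ) : Prop :=
  (∀ lam : ℝ, lam ≤ lam₀ → q lam = fun _ => 1) ∧
  (∀ lam : ℝ, lam₀ < lam → ∀ x, q lam x < 1)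

/-- The process with global extinction vectors `qX` and local extinction
vectors `qC` has a nonstrong local survival phase. -/
def HasNonstrongLocalPhase {X : Type*} (qX qC : ℝ → X → ℝ) : Prop :=
  ∃ lam : ℝ, 0 < lam ∧ qX lam < qC lam ∧ ∀ x, qC lam x < 1

theorem lt_of_le_sharpThreshold_of_threshold_lt {X : Type*} [Nonempty X]
    {qX qC : ℝ → X → ℝ} {lw ls lam : ℝ}
    (hw : IsThreshold qX lw) (hs : IsSharpThreshold qC ls) (hlw : lw < lam)
    (hls : lam ≤ ls) : qX lam < qC lam := by
  rw [hs.1 lam hls, Pi.lt_def]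
  exact ⟨fun x => (hw.2 lam hlw x).le, Classical.arbitrary X, hw.2 lam hlw _⟩

theorem eq_of_lt_threshold {X : Type*} {qX qC : ℝ → X → ℝ} {lw ls lam : ℝ}
    (hw : IsThreshold qX lw) (hs : IsSharpThreshold qC ls) (hle : lw ≤ ls) (hlam : lam < lw) :
    qX lam = qC lam := by
  rw [hw.1 lam hlam, hs.1 lam (hlam.trans_le hle).le]

/-- Any `lam` strictly between `lAw` and `min lAs lBw` would have `qAX lam < qAC lam` but
`qBX lam = qBC lam = 1`, contradicting the transfer. -/
theorem threshold_le_of_transfer {X : Type*} [Nonempty X]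
    {qAX qAC qBX qBC : ℝ → X → ℝ} {lAw lAs lBw lBs : ℝ}
    (hAw : 0 < lAw) (htAw : IsThreshold qAX lAw) (htAs : IsSharpThreshold qAC lAs)
    (htBw : IsThreshold qBX lBw) (htBs : IsSharpThreshold qBC lBs) (hB : lBw ≤ lBs)
    (transfer : ∀ lam : ℝ, 0 < lam → qAX lam < qAC lam → qBX lam < qBC lam)
    (hA : lAw < lAs) : lBw ≤ lAw := by
  by_contra! hlt
  obtain ⟨lam, hlAw, hlam⟩ := exists_between (lt_min hA hlt)
  have hA_lt : qAX lam < qAC lam :=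
    lt_of_le_sharpThreshold_of_threshold_lt htAw htAs hlAw (hlam.le.trans (min_le_left _ _))
  have hB_eq : qBX lam = qBC lam :=
    eq_of_lt_threshold htBw htBs hB (hlam.trans_le (min_le_right _ _))
  exact (transfer lam (hAw.trans hlAw) hA_lt).ne hB_eq

theorem cor58_general
    {X : Type*} [Nonempty X]
    (qMX qMC qNX qNC : ℝ → X → ℝ)
    (lMw lMs lNw lNs : ℝ)
    (hMw : 0 < lMw) (hNw : 0 < lNw)
    (htMw : IsThreshold qMX lMw) (htNw : IsThreshold qNX lNw)
    (htMs : IsSharpThreshold qMC lMs) (htNs : IsSharpThreshold qNC lNs)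
    (hM : lMw ≤ lMs) (hN : lNw ≤ lNs)
    (transfer : ∀ lam : ℝ, 0 < lam →
      (qMX lam = qMC lam ↔ qNX lam = qNC lam) ∧
      (qMX lam < qMC lam ↔ qNX lam < qNC lam) ∧
      (qMC lam < qMX lam ↔ qNC lam < qNX lam)) :
    (lMw < lMs → lNw ≤ lMw ∧ (lNw < lNs → lNw = lMw)) := by
  intro hMpure
  have hNM : lNw ≤ lMw := threshold_le_of_transfer hMw htMw htMs htNw htNs hN
    (fun lam hlam => (transfer lam hlam).2.1.mp) hMpure
  refine ⟨hNM, fun hNpure => hNM.antisymm ?_⟩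
  exact threshold_le_of_transfer hNw htNw htNs htMw htMs hM
    (fun lam hlam => (transfer lam hlam).2.1.mpr) hNpure

theorem cor58
    {X : Type*} [Nonempty X]
    (qMX qMC qNX qNC : ℝ → X → ℝ)
    (lMw lMs lNw lNs : ℝ)
    (hMw : 0 < lMw) (hMs : 0 < lMs) (hNw : 0 < lNw) (hNs : 0 < lNs)
    (htMw : IsThreshold qMX lMw) (htNw : IsThreshold qNX lNw)
    (htMs : IsSharpThreshold qMC lMs) (htNs : IsSharpThreshold qNC lNs)
    (hM : lMw ≤ lMs) (hN : lNw ≤ lNs)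
    (transfer : ∀ lam : ℝ, 0 < lam →
      (qMX lam = qMC lam ↔ qNX lam = qNC lam) ∧
      (qMX lam < qMC lam ↔ qNX lam < qNC lam) ∧
      (qMC lam < qMX lam ↔ qNC lam < qNX lam)) :
    (lMw < lMs → lNw ≤ lMw ∧ (lNw < lNs → lNw = lMw)) :=
  cor58_general qMX qMC qNX qNC lMw lMs lNw lNs hMw hNw htMw htNw htMs htNs hM hN transfer
end

section
/- Under the stated data, if max(λNs, λMw) < λ and λ ≤ λMs, then qNX λ < qNC λ in the pointwise order and qNC λ x < 1 for every x ∈ X; that is, the process N exhibits a nonstrong local survival phase at parameter λ. (Corollary 5.9.) -/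
theorem IsThreshold.lt_of_isSharpThreshold {X : Type*} [Nonempty X] {qX qC : ℝ → X → ℝ}
    {lw ls lam : ℝ} (hX : IsThreshold qX lw) (hC : IsSharpThreshold qC ls)
    (hlw : lw < lam) (hls : lam ≤ ls) : qX lam < qC lam := by
  rw [hC.1 lam hls]
  exact lt_of_strongLT (hX.2 lam hlw)

theorem cor59_general
    {X : Type*} [Nonempty X]
    (qMX qMC qNX qNC : ℝ → X → ℝ)
    (lMw lMs lNs : ℝ)
    (hMw : 0 < lMw)
    (htMw : IsThreshold qMX lMw)
    (htMs : IsSharpThreshold qMC lMs) (htNs : IsSharpThreshold qNC lNs)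
    (transfer : ∀ lam : ℝ, 0 < lam →
      (qMX lam = qMC lam ↔ qNX lam = qNC lam) ∧
      (qMX lam < qMC lam ↔ qNX lam < qNC lam) ∧
      (qMC lam < qMX lam ↔ qNC lam < qNX lam)) :
    (∀ lam : ℝ, max lNs lMw < lam → lam ≤ lMs →
      qNX lam < qNC lam ∧ ∀ x, qNC lam x < 1) := by
  intro lam hmax hle
  obtain ⟨hNs_lt, hMw_lt⟩ := max_lt_iff.mp hmax
  have hM_lt : qMX lam < qMC lam := htMw.lt_of_isSharpThreshold htMs hMw_lt hle
  exact ⟨(transfer lam (hMw.trans hMw_lt)).2.1.mp hM_lt, htNs.2 lam hNs_lt⟩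

theorem cor59
    {X : Type*} [Nonempty X]
    (qMX qMC qNX qNC : ℝ → X → ℝ)
    (lMw lMs lNw lNs : ℝ)
    (hMw : 0 < lMw) (hMs : 0 < lMs) (hNw : 0 < lNw) (hNs : 0 < lNs)
    (htMw : IsThreshold qMX lMw) (htNw : IsThreshold qNX lNw)
    (htMs : IsSharpThreshold qMC lMs) (htNs : IsSharpThreshold qNC lNs)
    (hM : lMw ≤ lMs) (hN : lNw ≤ lNs)
    (transfer : ∀ lam : ℝ, 0 < lam →
      (qMX lam = qMC lam ↔ qNX lam = qNC lam) ∧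
      (qMX lam < qMC lam ↔ qNX lam < qNC lam) ∧
      (qMC lam < qMX lam ↔ qNC lam < qNX lam)) :
    (∀ lam : ℝ, max lNs lMw < lam → lam ≤ lMs →
      qNX lam < qNC lam ∧ ∀ x, qNC lam x < 1) :=
  cor59_general qMX qMC qNX qNC lMw lMs lNs hMw htMw htMs htNs transfer
end

section
/- Under the stated data, if λMw < λMs, then at least one of the following holds: (a) λNw = λMw and λNs ≥ λMs; (b) N has a nonstrong local survival phase, i.e. there exists λ > 0 with qNX λ < qNC λ in the pointwise order and qNC λ x < 1 for every x ∈ X. (Proposition 5.10, item (1).) -/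
/-!
For `lam ∈ (λw, λs]` the global extinction vector is `< 𝟙` while the local one is still `𝟙`,
so `qX lam < qC lam`; conversely `qX lam < qC lam` forces `λw ≤ lam`. The transfer property
moves these windows between `M` and `N`. If `N` has no nonstrong local survival phase, every
`lam` of `N`'s window satisfies `lam ≤ λNs`; applied to `lam = λMs` this gives `λMs ≤ λNs`,
and comparing the left ends of the two windows gives `λNw = λMw`.
-/

section Window

variable {X : Type*} [Nonempty X] {qX qC qX' qC' : ℝ → X → ℝ} {lw ls lw' ls' lam : ℝ}

theorem lt_const_one_of_forall_lt_one {f : X → ℝ} (h : ∀ x, f x < 1) : f < fun _ => 1 :=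
  Pi.lt_def.2 ⟨fun x => (h x).le, ⟨Classical.arbitrary X, h _⟩⟩

theorem IsThreshold.lt_of_mem_Ioc (hw : IsThreshold qX lw) (hs : IsSharpThreshold qC ls)
    (h₁ : lw < lam) (h₂ : lam ≤ ls) : qX lam < qC lam := by
  rw [hs.1 lam h₂]
  exact lt_const_one_of_forall_lt_one (hw.2 lam h₁)

theorem IsThreshold.le_of_lt (hw : IsThreshold qX lw) (hs : IsSharpThreshold qC ls)
    (h : qX lam < qC lam) : lw ≤ lam := by
  by_contra! hlam
  rw [hw.1 lam hlam] at h
  rcases le_or_gt lam ls with hle | hgt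
  · exact h.ne (hs.1 lam hle).symm
  · let x := Classical.arbitrary X
    exact (h.le x).not_gt (hs.2 lam hgt x)

theorem IsThreshold.le_of_window_transfer (hw : IsThreshold qX lw) (hs : IsSharpThreshold qC ls)
    (hw' : IsThreshold qX' lw') (hs' : IsSharpThreshold qC' ls') (hpos : 0 < lw) (hlt : lw < ls)
    (transfer : ∀ lam, 0 < lam → qX lam < qC lam → qX' lam < qC' lam) : lw' ≤ lw := by
  by_contra! h
  obtain ⟨lam, h₁, h₂⟩ := exists_between (lt_min hlt h)
  have hwin : qX' lam < qC' lam :=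
    transfer lam (hpos.trans h₁) (hw.lt_of_mem_Ioc hs h₁ (h₂.le.trans (min_le_left _ _)))
  exact (h₂.trans_le (min_le_right _ _)).not_ge (hw'.le_of_lt hs' hwin)

end Window

theorem IsSharpThreshold.le_of_not_hasNonstrongLocalPhase {X : Type*} {qX qC : ℝ → X → ℝ}
    {ls lam : ℝ} (hs : IsSharpThreshold qC ls) (hN : ¬HasNonstrongLocalPhase qX qC)
    (hpos : 0 < lam) (h : qX lam < qC lam) : lam ≤ ls :=
  le_of_not_gt fun hgt => hN ⟨lam, hpos, h, hs.2 lam hgt⟩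

theorem prop510_item1_general
    {X : Type*} [Nonempty X]
    (qMX qMC qNX qNC : ℝ → X → ℝ)
    (lMw lMs lNw lNs : ℝ)
    (hMw : 0 < lMw) (hNw : 0 < lNw)
    (htMw : IsThreshold qMX lMw) (htNw : IsThreshold qNX lNw)
    (htMs : IsSharpThreshold qMC lMs) (htNs : IsSharpThreshold qNC lNs)
    (transfer : ∀ lam : ℝ, 0 < lam →
      (qMX lam = qMC lam ↔ qNX lam = qNC lam) ∧
      (qMX lam < qMC lam ↔ qNX lam < qNC lam) ∧
      (qMC lam < qMX lam ↔ qNC lam < qNX lam)) :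
    (lMw < lMs →
      (lNw = lMw ∧ lMs ≤ lNs) ∨ HasNonstrongLocalPhase qNX qNC) := by
  intro hlt
  refine or_iff_not_imp_right.2 fun hN => ?_
  have hMN : ∀ lam, 0 < lam → qMX lam < qMC lam → qNX lam < qNC lam :=
    fun lam hlam => (transfer lam hlam).2.1.1
  have hNM : ∀ lam, 0 < lam → qNX lam < qNC lam → qMX lam < qMC lam :=
    fun lam hlam => (transfer lam hlam).2.1.2
  have hs : lMs ≤ lNs := htNs.le_of_not_hasNonstrongLocalPhase hN (hMw.trans hlt)
    (hMN _ (hMw.trans hlt) (htMw.lt_of_mem_Ioc htMs hlt le_rfl))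
  have hNw_le : lNw ≤ lMw := htMw.le_of_window_transfer htMs htNw htNs hMw hlt hMN
  have hMw_le : lMw ≤ lNw := le_of_not_gt fun h =>
    (htNw.le_of_window_transfer htNs htMw htMs hNw (h.trans (hlt.trans_le hs)) hNM).not_gt h
  exact ⟨le_antisymm hNw_le hMw_le, hs⟩

theorem prop510_item1
    {X : Type*} [Nonempty X]
    (qMX qMC qNX qNC : ℝ → X → ℝ)
    (lMw lMs lNw lNs : ℝ)
    (hMw : 0 < lMw) (hMs : 0 < lMs) (hNw : 0 < lNw) (hNs : 0 < lNs)
    (htMw : IsThreshold qMX lMw) (htNw : IsThreshold qNX lNw)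
    (htMs : IsSharpThreshold qMC lMs) (htNs : IsSharpThreshold qNC lNs)
    (hM : lMw ≤ lMs) (hN : lNw ≤ lNs)
    (transfer : ∀ lam : ℝ, 0 < lam →
      (qMX lam = qMC lam ↔ qNX lam = qNC lam) ∧
      (qMX lam < qMC lam ↔ qNX lam < qNC lam) ∧
      (qMC lam < qMX lam ↔ qNC lam < qNX lam)) :
    (lMw < lMs →
      (lNw = lMw ∧ lMs ≤ lNs) ∨ HasNonstrongLocalPhase qNX qNC) :=
  prop510_item1_general qMX qMC qNX qNC lMw lMs lNw lNs hMw hNw htMw htNw htMs htNs transfer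
end

section
/- Under the stated data, if λMw < λMs and M has no nonstrong local survival phase, then λMs ≥ λNs. If in addition N also has no nonstrong local survival phase, then λNs = λMs and λNw = λMw. (Proposition 5.10, item (2).) -/
/-!
Transfer property (ii) says that the set of parameters at which global survival is strictly
more likely than local survival is the same for `M` and `N`. For each process this set contains
`(λw, λs]`, lies in `[λw, ∞)`, and lies in `[λw, λs]` when there is no nonstrong local survival
phase; since `(λw, λs]` is dense in `[λw, λs]`, comparing these bounds through the closure of
the common set yields the inequalities between the critical parameters.
-/

open Set

def survivalGap {X : Type*} (qX qC : ℝ → X → ℝ) : Set ℝ :=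
  {lam | 0 < lam ∧ qX lam < qC lam}

section survivalGap

variable {X : Type*} {qX qC : ℝ → X → ℝ} {lw ls : ℝ}

theorem Ioc_subset_survivalGap [Nonempty X] (hw₀ : 0 ≤ lw) (hw : IsThreshold qX lw)
    (hs : IsSharpThreshold qC ls) : Ioc lw ls ⊆ survivalGap qX qC := by
  rintro lam ⟨hwlam, hlams⟩
  refine ⟨hw₀.trans_lt hwlam, ?_⟩
  rw [hs.1 lam hlams, Pi.lt_def]
  exact ⟨fun x => (hw.2 lam hwlam x).le, Classical.arbitrary X, hw.2 lam hwlam _⟩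

theorem survivalGap_subset_Ici (hw : IsThreshold qX lw) (hs : IsSharpThreshold qC ls)
    (hws : lw ≤ ls) : survivalGap qX qC ⊆ Ici lw := by
  intro lam ⟨_, hgap⟩
  by_contra hlam
  replace hlam : lam < lw := not_le.1 hlam
  rw [hw.1 lam hlam, hs.1 lam (hlam.le.trans hws)] at hgap
  exact hgap.ne rfl

theorem survivalGap_subset_Iic (hs : IsSharpThreshold qC ls)
    (hno : ¬ HasNonstrongLocalPhase qX qC) : survivalGap qX qC ⊆ Iic ls :=
  fun lam ⟨hlam₀, hgap⟩ => not_lt.1 fun hlam => hno ⟨lam, hlam₀, hgap, hs.2 lam hlam⟩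

theorem Icc_subset_closure_survivalGap [Nonempty X] (hw₀ : 0 ≤ lw) (hws : lw < ls)
    (hw : IsThreshold qX lw) (hs : IsSharpThreshold qC ls) :
    Icc lw ls ⊆ closure (survivalGap qX qC) :=
  closure_Ioc hws.ne ▸ closure_mono (Ioc_subset_survivalGap hw₀ hw hs)

theorem closure_survivalGap_subset_Ici (hw : IsThreshold qX lw) (hs : IsSharpThreshold qC ls)
    (hws : lw ≤ ls) : closure (survivalGap qX qC) ⊆ Ici lw :=
  closure_minimal (survivalGap_subset_Ici hw hs hws) isClosed_Ici

theorem closure_survivalGap_subset_Iic (hs : IsSharpThreshold qC ls)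
    (hno : ¬ HasNonstrongLocalPhase qX qC) : closure (survivalGap qX qC) ⊆ Iic ls :=
  closure_minimal (survivalGap_subset_Iic hs hno) isClosed_Iic

end survivalGap

theorem prop510_item2_general
    {X : Type*} [Nonempty X]
    (qMX qMC qNX qNC : ℝ → X → ℝ)
    (lMw lMs lNw lNs : ℝ)
    (hMw : 0 < lMw) (hNw : 0 < lNw)
    (htMw : IsThreshold qMX lMw) (htNw : IsThreshold qNX lNw)
    (htMs : IsSharpThreshold qMC lMs) (htNs : IsSharpThreshold qNC lNs)
    (hM : lMw ≤ lMs) (hN : lNw ≤ lNs)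
    (transfer : ∀ lam : ℝ, 0 < lam →
      (qMX lam = qMC lam ↔ qNX lam = qNC lam) ∧
      (qMX lam < qMC lam ↔ qNX lam < qNC lam) ∧
      (qMC lam < qMX lam ↔ qNC lam < qNX lam)) :
    (lMw < lMs → ¬ HasNonstrongLocalPhase qMX qMC →
      lNs ≤ lMs ∧
      (¬ HasNonstrongLocalPhase qNX qNC → lNs = lMs ∧ lNw = lMw)) := by
  intro hlt hMno
  have hgap : survivalGap qNX qNC = survivalGap qMX qMC :=
    ext fun lam => and_congr_right fun hlam => (transfer lam hlam).2.1.symm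
  have hM_Icc := Icc_subset_closure_survivalGap hMw.le hlt htMw htMs
  have hN_Icc (hNlt : lNw < lNs) : Icc lNw lNs ⊆ closure (survivalGap qMX qMC) :=
    hgap ▸ Icc_subset_closure_survivalGap hNw.le hNlt htNw htNs
  have hNwMw : lNw ≤ lMw := (Icc_subset_Ici_iff hM).1 <|
    hM_Icc.trans (hgap ▸ closure_survivalGap_subset_Ici htNw htNs hN)
  have hNsMs : lNs ≤ lMs := by
    obtain hNeq | hNlt := hN.eq_or_lt
    · linarith
    · exact (Icc_subset_Iic_iff hN).1 ((hN_Icc hNlt).trans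
        (closure_survivalGap_subset_Iic htMs hMno))
  refine ⟨hNsMs, fun hNno => ?_⟩
  have hMsNs : lMs ≤ lNs := (Icc_subset_Iic_iff hM).1 <|
    hM_Icc.trans (hgap ▸ closure_survivalGap_subset_Iic htNs hNno)
  have hMwNw : lMw ≤ lNw := (Icc_subset_Ici_iff hN).1 <|
    (hN_Icc (by linarith)).trans (closure_survivalGap_subset_Ici htMw htMs hM)
  exact ⟨le_antisymm hNsMs hMsNs, le_antisymm hNwMw hMwNw⟩

theorem prop510_item2
    {X : Type*} [Nonempty X]
    (qMX qMC qNX qNC : ℝ → X → ℝ)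
    (lMw lMs lNw lNs : ℝ)
    (hMw : 0 < lMw) (hMs : 0 < lMs) (hNw : 0 < lNw) (hNs : 0 < lNs)
    (htMw : IsThreshold qMX lMw) (htNw : IsThreshold qNX lNw)
    (htMs : IsSharpThreshold qMC lMs) (htNs : IsSharpThreshold qNC lNs)
    (hM : lMw ≤ lMs) (hN : lNw ≤ lNs)
    (transfer : ∀ lam : ℝ, 0 < lam →
      (qMX lam = qMC lam ↔ qNX lam = qNC lam) ∧
      (qMX lam < qMC lam ↔ qNX lam < qNC lam) ∧
      (qMC lam < qMX lam ↔ qNC lam < qNX lam)) :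
    (lMw < lMs → ¬ HasNonstrongLocalPhase qMX qMC →
      lNs ≤ lMs ∧
      (¬ HasNonstrongLocalPhase qNX qNC → lNs = lMs ∧ lNw = lMw)) :=
  prop510_item2_general qMX qMC qNX qNC lMw lMs lNw lNs hMw hNw htMw htNw htMs htNs hM hN transfer
end
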